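/- Let T be a finite index set with positive real weights w, let n ≤ |T|, and let (t_0, ..., t_{n-1}) be a sequence of n distinct elements of T. Then the product of the sequential selection probabilities ∏_{i=0}^{n-1} P̂(t_i | [t_0,...,t_{i-1}]; T, n) equals (∏_{i=0}^{n-1} w_{t_i}) / (n! · e_n(T; w)). In particular the product is the same for every ordering of the same n-element subset. -/

import Mathlib

/-! Prepending an element `a` to the list of already selected elements is the same as
deleting `a` from the ground set and lowering the memory size by one, so the product
splits as the first factor `w a · e_{n-1}(T \ {a}) / (n · e_n(T))` times the product for
`(T \ {a}, n - 1)`. By induction the latter is `∏ w / ((n-1)! · e_{n-1}(T \ {a}))`, and the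
factor `e_{n-1}(T \ {a})`, positive because the weights are, cancels. -/

/-- Weighted elementary symmetric sum: `e_m(S; w) = Σ_{T̂ ⊆ S, |T̂| = m} ∏_{j ∈ T̂} w_j`. -/
noncomputable def esymm {ι : Type*} (S : Finset ι) (w : ι → ℝ) (m : ℕ) : ℝ :=
  ∑ T ∈ S.powersetCard m, ∏ j ∈ T, w j

/-- The sequential selection probability
`P̂(t | V; T, n) = w_t · e_{n-i-1}(T \ (V ∪ {t}); w) / ((n - i) · e_{n-i}(T \ V; w))`
where `i` is the number of already-selected elements recorded in the list `V`. -/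
noncomputable def Phat {ι : Type*} [DecidableEq ι] (T : Finset ι) (w : ι → ℝ) (n : ℕ)
    (V : List ι) (t : ι) : ℝ :=
  w t * esymm (T \ insert t V.toFinset) w (n - V.length - 1) /
    (((n - V.length : ℕ) : ℝ) * esymm (T \ V.toFinset) w (n - V.length))

section

variable {ι : Type*}

@[simp]
lemma esymm_zero (S : Finset ι) (w : ι → ℝ) : esymm S w 0 = 1 := by
  simp [esymm]

lemma esymm_pos {S : Finset ι} {w : ι → ℝ} (hw : ∀ j ∈ S, 0 < w j) {m : ℕ}
    (h : m ≤ S.card) : 0 < esymm S w m :=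
  Finset.sum_pos
    (fun _ ht => Finset.prod_pos fun j hj => hw j ((Finset.mem_powersetCard.mp ht).1 hj))
    (Finset.powersetCard_nonempty.mpr h)

variable [DecidableEq ι]

lemma Phat_nil (T : Finset ι) (w : ι → ℝ) (n : ℕ) (t : ι) :
    Phat T w n [] t = w t * esymm (T.erase t) w (n - 1) / (n * esymm T w n) := by
  simp [Phat, Finset.sdiff_singleton_eq_erase]

lemma Phat_cons (T : Finset ι) (w : ι → ℝ) (n : ℕ) (a : ι) (V : List ι) (t : ι) :
    Phat T w n (a :: V) t = Phat (T.erase a) w (n - 1) V t := by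
  simp only [Phat, List.toFinset_cons, List.length_cons, Finset.sdiff_insert,
    Finset.erase_sdiff_comm, Finset.erase_right_comm (a := a), Nat.sub_sub, Nat.add_comm 1]

lemma prod_Phat_eq_div {T : Finset ι} {w : ι → ℝ} (hw : ∀ j ∈ T, 0 < w j) {L : List ι}
    (hL : L.length ≤ T.card) (hnd : L.Nodup) (hmem : ∀ x ∈ L, x ∈ T) :
    ∏ i : Fin L.length, Phat T w L.length (L.take i) (L.get i)
      = (L.map w).prod / (L.length.factorial * esymm T w L.length) := by
  induction L generalizing T with
  | nil => simp
  | cons a L ih =>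
    obtain ⟨haL, hnd⟩ := List.nodup_cons.mp hnd
    have haT : a ∈ T := hmem a List.mem_cons_self
    have hw' : ∀ j ∈ T.erase a, 0 < w j := fun j hj => hw j (Finset.mem_of_mem_erase hj)
    have hL' : L.length ≤ (T.erase a).card := by
      rw [Finset.card_erase_of_mem haT]; rw [List.length_cons] at hL; omega
    have hmem' : ∀ x ∈ L, x ∈ T.erase a := fun x hx =>
      Finset.mem_erase.mpr ⟨ne_of_mem_of_not_mem hx haL, hmem x (List.mem_cons_of_mem a hx)⟩
    have hpos : 0 < esymm (T.erase a) w L.length := esymm_pos hw' hL'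
    calc ∏ i : Fin (a :: L).length, Phat T w (a :: L).length ((a :: L).take i) ((a :: L).get i)
        = Phat T w (L.length + 1) [] a *
            ∏ i : Fin L.length, Phat (T.erase a) w L.length (L.take i) (L.get i) := by
          simp [Fin.prod_univ_succ, Phat_cons]
      _ = w a * esymm (T.erase a) w L.length / ((L.length + 1) * esymm T w (L.length + 1)) *
            ((L.map w).prod / (L.length.factorial * esymm (T.erase a) w L.length)) := by
          rw [Phat_nil, ih hw' hL' hnd hmem']
          simp
      _ = ((a :: L).map w).prod / ((a :: L).length.factorial * esymm T w (a :: L).length) := by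
          rw [List.map_cons, List.prod_cons, List.length_cons, Nat.factorial_succ]
          push_cast
          field_simp

end

/-- For a finite index set `T` with positive weights, `n ≤ |T|`, and a sequence `L` of `n`
distinct elements of `T`, the product of the sequential selection probabilities
`∏_{i=0}^{n-1} P̂(t_i | [t_0,...,t_{i-1}]; T, n)` equals
`(∏_{i=0}^{n-1} w_{t_i}) / (n! · e_n(T; w))`.  In particular the product is the same
for every ordering of the same `n`-element subset. -/
theorem prod_Phat_eq {ι : Type*} [DecidableEq ι] (T : Finset ι) (w : ι → ℝ)
    (hw : ∀ j ∈ T, 0 < w j) (n : ℕ) (hn : n ≤ T.card)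
    (L : List ι) (hnd : L.Nodup) (hmem : ∀ x ∈ L, x ∈ T) (hlen : L.length = n) :
    (∏ i : Fin L.length, Phat T w n (L.take i) (L.get i))
        = (L.map w).prod / (Nat.factorial n * esymm T w n) ∧
      ∀ L' : List ι, L'.Nodup → L'.toFinset = L.toFinset →
        (∏ i : Fin L'.length, Phat T w n (L'.take i) (L'.get i))
          = (∏ i : Fin L.length, Phat T w n (L.take i) (L.get i)) := by
  subst hlen
  refine ⟨prod_Phat_eq_div hw hn hnd hmem, fun L' hnd' hL' => ?_⟩
  have hperm : L'.Perm L := List.perm_of_nodup_nodup_toFinset_eq hnd' hnd hL'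
  have hmem' : ∀ x ∈ L', x ∈ T := fun x hx => hmem x (hperm.mem_iff.mp hx)
  rw [prod_Phat_eq_div hw hn hnd hmem, ← hperm.length_eq,
    prod_Phat_eq_div hw (hperm.length_eq ▸ hn) hnd' hmem', (hperm.map w).prod_eq]
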